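/- Let L_n^w be the number of leaves of a weighted recursive tree of size n whose weight sequence satisfies w_i = 1 for all i > k, and L_{n-k+1}^θ the number of leaves of a Hoppe tree of size n-k+1 with root weight θ = w_1 + ... + w_k coupled via the root-splitting construction. Then L_{n-k+1}^θ ≤ L_n^w ≤ L_{n-k+1}^θ + k - 1 almost surely under the coupling. -/

import Mathlib

open MeasureTheory Finset Filter

/-- Attachment probability in a weighted recursive tree: node `j` attaches to node `i`. -/
noncomputable def wrtStep (w : ℕ → ℝ) (j i : ℕ) : ℝ :=
  if j ≤ 1 then (if i = 0 then 1 else 0)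
  else if 1 ≤ i ∧ i < j then w i / (∑ k ∈ Finset.Icc 1 (j - 1), w k) else 0

/-- The law of a weighted recursive tree on `n` nodes, as a measure on parent functions
`ω : ℕ → ℕ`, where `ω j` is the parent of node `j` (and `ω j = 0` for irrelevant `j`). -/
noncomputable def wrtMeasure (w : ℕ → ℝ) (n : ℕ) : Measure (ℕ → ℕ) :=
  ∑ t : Fin (n + 1) → Fin (n + 1),
    (ENNReal.ofReal (∏ j : Fin (n + 1), wrtStep w j.val (t j).val)) •
      Measure.dirac (fun j => if h : j < n + 1 then (t ⟨j, h⟩).val else 0)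

/-- `i` is an ancestor of `m`: some iterate of the parent map sends `m` to `i`. -/
def isAncestor (ω : ℕ → ℕ) (i m : ℕ) : Prop := ∃ l, 0 < l ∧ ω^[l] m = i

/-- The depth of node `m`: its number of ancestors (nodes on the path from the root to `m`). -/
noncomputable def depth (ω : ℕ → ℕ) (m : ℕ) : ℕ :=
  Set.ncard {i | 1 ≤ i ∧ isAncestor ω i m}

/-- The height of the tree on nodes `1, …, n`: the maximal depth of a node. -/
noncomputable def height (ω : ℕ → ℕ) (n : ℕ) : ℕ :=
  (Finset.Icc 1 n).sup (fun i => depth ω i)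

/-- The number of branches: the number of children of the root. -/
def branches (ω : ℕ → ℕ) (n : ℕ) : ℕ :=
  ((Finset.Icc 2 n).filter (fun j => ω j = 1)).card

open scoped Classical in
/-- The number of leaves: nodes with no children among nodes `1, …, n`. -/
noncomputable def numLeaves (ω : ℕ → ℕ) (n : ℕ) : ℕ :=
  ((Finset.Icc 1 n).filter (fun i => ∀ j ∈ Finset.Icc (i + 1) n, ω j ≠ i)).card

/-!
Contracting the nodes `1, …, k` of a weighted recursive tree into one root of weight
`θ = w 1 + ⋯ + w k` yields a Hoppe tree with root weight `θ`: as `w i = 1` for `i > k`, node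
`j > k` attaches to one of the merged nodes with probability `θ / (θ + j - k - 1)` and to any
other earlier node with probability `1 / (θ + j - k - 1)`, exactly as node `j - k + 1` of the
Hoppe tree does. The coupling is the law of the pair (tree, contracted tree). Contraction
preserves the leaves outside `1, …, k`. If the merged root is a leaf, so is node `k`; otherwise
some node among `1, …, k` has a child. Either way the number of leaves among `1, …, k` lies
between the root's count and that count plus `k - 1`.
-/

section WeightedDirac

variable {ι α β : Type*} [Fintype ι] [MeasurableSpace α] [MeasurableSpace β]

theorem map_sum_smul_dirac {f : α → β} (hf : Measurable f) (c : ι → ENNReal)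
    (x : ι → α) :
    (∑ i, c i • Measure.dirac (x i)).map f = ∑ i, c i • Measure.dirac (f (x i)) := by
  simp only [← Measure.sum_fintype, Measure.map_sum hf.aemeasurable, Measure.map_smul,
    Measure.map_dirac' hf]

theorem ae_sum_smul_dirac [MeasurableSingletonClass α] {c : ι → ENNReal} {x : ι → α}
    {p : α → Prop} (h : ∀ i, c i ≠ 0 → p (x i)) :
    ∀ᵐ a ∂(∑ i, c i • Measure.dirac (x i)), p a := by
  refine ae_finsetSum_measure_iff.2 fun i _ ↦ ?_
  by_cases hc : c i = 0
  · simp [hc]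
  · exact Measure.ae_smul_measure (by simpa [ae_dirac_eq] using h i hc) _

end WeightedDirac

section WeightedRecursiveTree

variable (w : ℕ → ℝ)

theorem wrtStep_nonneg (hw : ∀ i, 0 ≤ w i) (j i : ℕ) : 0 ≤ wrtStep w j i := by
  unfold wrtStep
  split_ifs
  exacts [zero_le_one, le_rfl, div_nonneg (hw i) (sum_nonneg fun l _ ↦ hw l), le_rfl]

theorem sum_wrtStep {j : ℕ} (hj : 2 ≤ j) (s : Finset ℕ) :
    ∑ i ∈ s, wrtStep w j i =
      (∑ i ∈ s with 1 ≤ i ∧ i < j, w i) / ∑ i ∈ Icc 1 (j - 1), w i := by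
  rw [sum_filter, sum_div]
  refine sum_congr rfl fun i _ ↦ ?_
  simp only [wrtStep, if_neg (show ¬ j ≤ 1 by omega)]
  split_ifs <;> simp

theorem sum_range_wrtStep (hw : ∀ i, 0 < w i) {j N : ℕ} (hjN : j ≤ N) :
    ∑ i ∈ range (N + 1), wrtStep w j i = 1 := by
  rcases le_or_gt j 1 with hj | hj
  · simp [wrtStep, hj]
  · have hpos : 0 < ∑ i ∈ Icc 1 (j - 1), w i :=
      sum_pos (fun i _ ↦ hw i) (nonempty_Icc.2 (by omega))
    have hfilter : {i ∈ range (N + 1) | 1 ≤ i ∧ i < j} = Icc 1 (j - 1) := by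
      ext; simp only [mem_filter, mem_range, mem_Icc]; omega
    rw [sum_wrtStep w hj, hfilter, div_self hpos.ne']

def parentFun (n : ℕ) (t : Fin (n + 1) → Fin (n + 1)) : ℕ → ℕ :=
  fun j ↦ if h : j < n + 1 then t ⟨j, h⟩ else 0

noncomputable def tableWeight (n : ℕ) (t : Fin (n + 1) → Fin (n + 1)) : ℝ :=
  ∏ j : Fin (n + 1), wrtStep w j (t j)

theorem wrtMeasure_eq (n : ℕ) :
    wrtMeasure w n =
      ∑ t, ENNReal.ofReal (tableWeight w n t) • Measure.dirac (parentFun n t) := rfl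

theorem tableWeight_eq_prod_range (n : ℕ) (t : Fin (n + 1) → Fin (n + 1)) :
    tableWeight w n t = ∏ j ∈ range (n + 1), wrtStep w j (parentFun n t j) := by
  rw [tableWeight, ← Fin.prod_univ_eq_prod_range fun j ↦ wrtStep w j (parentFun n t j)]
  simp [parentFun, Fin.is_le]

theorem one_le_parentFun_of_tableWeight_ne_zero {n : ℕ} {t : Fin (n + 1) → Fin (n + 1)}
    (ht : tableWeight w n t ≠ 0) {j : ℕ} (hj : 2 ≤ j) (hjn : j ≤ n) :
    1 ≤ parentFun n t j := by
  rw [tableWeight_eq_prod_range] at ht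
  have hstep := prod_ne_zero_iff.1 ht j (mem_range.2 (by omega))
  by_contra! h0
  simp [wrtStep, show ¬ j ≤ 1 by omega, show parentFun n t j = 0 by omega] at hstep

theorem sum_tableWeight (hw : ∀ i, 0 < w i) (n : ℕ) : ∑ t, tableWeight w n t = 1 := by
  rw [← Fintype.piFinset_univ]
  simp only [tableWeight]
  rw [← prod_univ_sum _ fun (j i : Fin (n + 1)) ↦ wrtStep w j i]
  refine prod_eq_one fun j _ ↦ ?_
  rw [Fin.sum_univ_eq_sum_range (wrtStep w j) (n + 1)]
  exact sum_range_wrtStep w hw j.is_le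

theorem isProbabilityMeasure_wrtMeasure (hw : ∀ i, 0 < w i) (n : ℕ) :
    IsProbabilityMeasure (wrtMeasure w n) := by
  have hnonneg t : 0 ≤ tableWeight w n t :=
    prod_nonneg fun j _ ↦ wrtStep_nonneg w (fun i ↦ (hw i).le) _ _
  constructor
  simp only [wrtMeasure_eq, Measure.coe_finsetSum, Finset.sum_apply, Measure.smul_apply,
    measure_univ, smul_eq_mul, mul_one]
  rw [← ENNReal.ofReal_sum_of_nonneg fun t _ ↦ hnonneg t, sum_tableWeight w hw,
    ENNReal.ofReal_one]

end WeightedRecursiveTree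

section Merging

noncomputable def hoppeWeight (θ : ℝ) (i : ℕ) : ℝ := if i = 1 then θ else 1

def mergeLabel (k i : ℕ) : ℕ := if i ≤ k then 1 else i - k + 1

variable {w : ℕ → ℝ} {k : ℕ}

theorem sum_Icc_eq_add_of_eq_one (hconst : ∀ i, k < i → w i = 1) {a : ℕ} (ha : k ≤ a) :
    ∑ i ∈ Icc 1 a, w i = ∑ i ∈ Icc 1 k, w i + (a - k : ℕ) := by
  rw [show Icc 1 a = Ioc 0 a from Icc_add_one_left_eq_Ioc 0 a,
    show Icc 1 k = Ioc 0 k from Icc_add_one_left_eq_Ioc 0 k,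
    ← sum_Ioc_consecutive w (Nat.zero_le k) ha,
    sum_congr rfl fun i hi ↦ hconst i (mem_Ioc.1 hi).1]
  simp

theorem sum_Icc_sub_one_eq_sum_Icc_hoppeWeight (hconst : ∀ i, k < i → w i = 1)
    {j : ℕ} (hkj : k < j) :
    ∑ i ∈ Icc 1 (j - 1), w i =
      ∑ i ∈ Icc 1 (j - k + 1 - 1), hoppeWeight (∑ i ∈ Icc 1 k, w i) i := by
  have hhoppe : ∀ i, 1 < i → hoppeWeight (∑ i ∈ Icc 1 k, w i) i = 1 := fun i hi ↦
    if_neg hi.ne'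
  rw [sum_Icc_eq_add_of_eq_one hconst (by omega), sum_Icc_eq_add_of_eq_one hhoppe (by omega)]
  simp only [Icc_self, sum_singleton, hoppeWeight, if_true]
  rw [show j - k + 1 - 1 - 1 = j - 1 - k by omega]

theorem mergeLabel_eq_iff (hk : 1 ≤ k) {i b : ℕ} (hb : 2 ≤ b) :
    mergeLabel k i = b ↔ i = b + k - 1 := by
  unfold mergeLabel; split_ifs <;> omega

theorem sum_filter_mergeLabel (hk : 1 ≤ k) (hconst : ∀ i, k < i → w i = 1) {j : ℕ}
    (hkj : k < j) (b : ℕ) :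
    ∑ i ∈ Ico 1 j with mergeLabel k i = b, w i =
      if 1 ≤ b ∧ b < j - k + 1 then hoppeWeight (∑ i ∈ Icc 1 k, w i) b else 0 := by
  rcases lt_trichotomy b 1 with hb | rfl | hb
  · have hempty : ({i ∈ Ico 1 j | mergeLabel k i = b} : Finset ℕ) = ∅ :=
      filter_eq_empty_iff.2 fun i _ ↦ by unfold mergeLabel; split_ifs <;> omega
    rw [hempty, sum_empty, if_neg (by omega)]
  · have hroot : ({i ∈ Ico 1 j | mergeLabel k i = 1} : Finset ℕ) = Icc 1 k := by
      ext i
      rw [Finset.mem_filter, mem_Ico, mem_Icc, mergeLabel]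
      split_ifs <;> omega
    rw [hroot, if_pos (by omega), hoppeWeight, if_pos rfl]
  · rw [sum_filter]
    simp only [mergeLabel_eq_iff hk hb, sum_ite_eq', mem_Ico, hoppeWeight, if_neg hb.ne']
    split_ifs <;> first | rfl | omega | exact hconst _ (by omega)

theorem sum_wrtStep_filter_mergeLabel (hk : 1 ≤ k) (hconst : ∀ i, k < i → w i = 1) {j n : ℕ}
    (hkj : k < j) (hjn : j ≤ n) (b : ℕ) :
    ∑ i ∈ range (n + 1) with mergeLabel k i = b, wrtStep w j i =
      wrtStep (hoppeWeight (∑ i ∈ Icc 1 k, w i)) (j - k + 1) b := by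
  have hfilter : {i ∈ {i ∈ range (n + 1) | mergeLabel k i = b} | 1 ≤ i ∧ i < j} =
      {i ∈ Ico 1 j | mergeLabel k i = b} := by
    ext; simp only [Finset.mem_filter, mem_range, mem_Ico]; omega
  rw [sum_wrtStep w (by omega), hfilter, sum_filter_mergeLabel hk hconst hkj,
    sum_Icc_sub_one_eq_sum_Icc_hoppeWeight hconst hkj]
  simp only [wrtStep, if_neg (show ¬ j - k + 1 ≤ 1 by omega)]
  split_ifs <;> simp

end Merging

section Contraction

/-- Node `j ≥ 2` of the contracted tree on `m` nodes is node `j + k - 1` of the original tree;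
the nodes `1, …, k` of the original tree are merged into the root `1`. -/
def contractRoot (k m : ℕ) (ω : ℕ → ℕ) : ℕ → ℕ :=
  fun j ↦ if 2 ≤ j ∧ j ≤ m then mergeLabel k (ω (j + k - 1)) else 0

theorem measurable_contractRoot (k m : ℕ) : Measurable (contractRoot k m) := by
  refine measurable_pi_lambda _ fun j ↦ ?_
  unfold contractRoot
  split_ifs
  · exact (measurable_from_nat (f := mergeLabel k)).comp (measurable_pi_apply _)
  · exact measurable_const

variable {k n : ℕ}

theorem contractRoot_eq_iff (hk : 1 ≤ k) (hkn : k ≤ n) {ω σ : ℕ → ℕ}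
    (hσ : ∀ a, a < 2 ∨ n - k + 1 < a → σ a = 0) :
    contractRoot k (n - k + 1) ω = σ ↔
      ∀ j, k < j → j ≤ n → mergeLabel k (ω j) = σ (j - k + 1) := by
  constructor
  · rintro rfl j hkj hjn
    simp only [contractRoot, if_pos (show 2 ≤ j - k + 1 ∧ j - k + 1 ≤ n - k + 1 by omega),
      show j - k + 1 + k - 1 = j by omega]
  · intro h
    funext a
    unfold contractRoot
    split_ifs with ha
    · simpa [show a + k - 1 - k + 1 = a by omega] using h (a + k - 1) (by omega) (by omega)
    · exact (hσ a (by omega)).symm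

theorem parentFun_le (t : Fin (n + 1) → Fin (n + 1)) (j : ℕ) : parentFun n t j ≤ n := by
  unfold parentFun
  split_ifs
  exacts [Fin.is_le _, Nat.zero_le n]

theorem parentFun_injective : Function.Injective (parentFun n) := fun s t h ↦ by
  funext j
  simpa [parentFun, Fin.ext_iff, j.is_le] using congrFun h j

def contractTable (k n : ℕ) (t : Fin (n + 1) → Fin (n + 1)) :
    Fin (n - k + 1 + 1) → Fin (n - k + 1 + 1) :=
  fun a ↦ ⟨contractRoot k (n - k + 1) (parentFun n t) a, by
    have := parentFun_le t (a + k - 1)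
    unfold contractRoot mergeLabel
    split_ifs <;> omega⟩

theorem parentFun_contractTable (t : Fin (n + 1) → Fin (n + 1)) :
    parentFun (n - k + 1) (contractTable k n t) = contractRoot k (n - k + 1) (parentFun n t) := by
  funext j
  unfold parentFun
  split_ifs with hj
  · rfl
  · simp only [contractRoot, if_neg (show ¬ (2 ≤ j ∧ j ≤ n - k + 1) by omega)]

end Contraction

section Pushforward

theorem tableWeight_eq_ite_mul_prod (v : ℕ → ℝ) (m : ℕ)
    (s : Fin (m + 1 + 1) → Fin (m + 1 + 1)) :
    tableWeight v (m + 1) s =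
      (if parentFun (m + 1) s 0 = 0 ∧ parentFun (m + 1) s 1 = 0 then 1 else 0) *
        ∏ x ∈ range m, wrtStep v (x + 2) (parentFun (m + 1) s (x + 2)) := by
  have hstep : ∀ j ≤ 1, ∀ i, wrtStep v j i = if i = 0 then 1 else 0 :=
    fun _ hj _ ↦ if_pos hj
  rw [tableWeight_eq_prod_range, prod_range_succ', prod_range_succ', hstep 0 zero_le_one,
    hstep (0 + 1) le_rfl]
  by_cases h0 : parentFun (m + 1) s 0 = 0 <;> by_cases h1 : parentFun (m + 1) s 1 = 0 <;>
    simp [h0, h1]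

variable {w : ℕ → ℝ} {k n : ℕ}

theorem filter_contractTable_eq_empty {s : Fin (n - k + 1 + 1) → Fin (n - k + 1 + 1)}
    (hs : ¬ (parentFun (n - k + 1) s 0 = 0 ∧ parentFun (n - k + 1) s 1 = 0)) :
    ({t | contractTable k n t = s} : Finset _) = ∅ := by
  refine filter_eq_empty_iff.2 fun t _ hts ↦ hs ?_
  simp [← hts, parentFun_contractTable, contractRoot]

theorem filter_contractTable_eq_piFinset (hk : 1 ≤ k) (hkn : k ≤ n)
    {s : Fin (n - k + 1 + 1) → Fin (n - k + 1 + 1)}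
    (hs : parentFun (n - k + 1) s 0 = 0 ∧ parentFun (n - k + 1) s 1 = 0) :
    ({t | contractTable k n t = s} : Finset _) =
      Fintype.piFinset fun j : Fin (n + 1) ↦ if k < j.val
        then univ.filter fun i : Fin (n + 1) ↦
          mergeLabel k i = parentFun (n - k + 1) s (j - k + 1)
        else univ := by
  have hσ : ∀ a, a < 2 ∨ n - k + 1 < a → parentFun (n - k + 1) s a = 0 := by
    rintro a (ha | ha)
    · interval_cases a <;> simp [hs]
    · simp [parentFun, show ¬ a < n - k + 1 + 1 by omega]
  ext t
  simp only [Finset.mem_filter, mem_univ, true_and, Fintype.mem_piFinset]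
  rw [← parentFun_injective.eq_iff, parentFun_contractTable, contractRoot_eq_iff hk hkn hσ]
  constructor
  · intro h j
    split_ifs with hkj
    · simpa [parentFun, Fin.is_le] using h j hkj j.is_le
    · exact mem_univ _
  · intro h j hkj hjn
    simpa [parentFun, hkj, Nat.lt_succ_of_le hjn] using h ⟨j, by omega⟩

theorem sum_tableWeight_filter_contractTable (hw : ∀ i, 0 < w i) (hk : 1 ≤ k) (hkn : k ≤ n)
    (hconst : ∀ i, k < i → w i = 1) (s : Fin (n - k + 1 + 1) → Fin (n - k + 1 + 1)) :
    ∑ t with contractTable k n t = s, tableWeight w n t =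
      tableWeight (hoppeWeight (∑ i ∈ Icc 1 k, w i)) (n - k + 1) s := by
  set θ := ∑ i ∈ Icc 1 k, w i
  set σ := parentFun (n - k + 1) s
  rw [tableWeight_eq_ite_mul_prod]
  split_ifs with hs
  swap
  · rw [filter_contractTable_eq_empty hs, sum_empty, zero_mul]
  have hfactor (j : Fin (n + 1)) :
      ∑ i ∈ (if k < j.val
        then univ.filter fun i : Fin (n + 1) ↦ mergeLabel k i = σ (j - k + 1)
        else univ), wrtStep w j i =
      if k < j.val then wrtStep (hoppeWeight θ) (j - k + 1) (σ (j - k + 1)) else 1 := by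
    split_ifs with hkj
    · rw [sum_filter, Fin.sum_univ_eq_sum_range
        (fun i ↦ if mergeLabel k i = σ (j - k + 1) then wrtStep w j i else 0), ← sum_filter,
        sum_wrtStep_filter_mergeLabel hk hconst hkj j.is_le]
    · rw [Fin.sum_univ_eq_sum_range (wrtStep w j), sum_range_wrtStep w hw j.is_le]
  -- The fiber is a box of tables, so its weight factorizes over the nodes `j`.
  rw [one_mul, filter_contractTable_eq_piFinset hk hkn hs]
  simp only [tableWeight]
  rw [← prod_univ_sum _ fun (j i : Fin (n + 1)) ↦ wrtStep w j i]
  rw [prod_congr rfl fun j _ ↦ hfactor j, Fin.prod_univ_eq_prod_range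
      (fun j ↦ if k < j then wrtStep (hoppeWeight θ) (j - k + 1) (σ (j - k + 1)) else 1),
    show n + 1 = k + 1 + (n - k) by omega, prod_range_add,
    prod_eq_one fun j hj ↦ if_neg (by simp at hj; omega), one_mul]
  refine prod_congr rfl fun x _ ↦ ?_
  rw [if_pos (by omega), show k + 1 + x - k + 1 = x + 2 by omega]

theorem map_contractRoot_wrtMeasure (hw : ∀ i, 0 < w i) (hk : 1 ≤ k) (hkn : k ≤ n)
    (hconst : ∀ i, k < i → w i = 1) :
    (wrtMeasure w n).map (contractRoot k (n - k + 1)) =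
      wrtMeasure (hoppeWeight (∑ i ∈ Icc 1 k, w i)) (n - k + 1) := by
  rw [wrtMeasure_eq, map_sum_smul_dirac (measurable_contractRoot _ _), wrtMeasure_eq]
  simp only [← parentFun_contractTable]
  rw [← sum_fiberwise univ (contractTable k n) fun t ↦
    ENNReal.ofReal (tableWeight w n t) •
      Measure.dirac (parentFun (n - k + 1) (contractTable k n t))]
  refine sum_congr rfl fun s _ ↦ ?_
  have hnonneg t : 0 ≤ tableWeight w n t :=
    prod_nonneg fun j _ ↦ wrtStep_nonneg w (fun i ↦ (hw i).le) _ _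
  rw [sum_congr rfl fun t ht ↦ by rw [(Finset.mem_filter.1 ht).2], ← sum_smul,
    ← ENNReal.ofReal_sum_of_nonneg fun t _ ↦ hnonneg t,
    sum_tableWeight_filter_contractTable hw hk hkn hconst]

end Pushforward

section Leaves

open scoped Classical in
noncomputable def leaves (ω : ℕ → ℕ) (n : ℕ) : Finset ℕ :=
  {i ∈ Icc 1 n | ∀ j ∈ Icc (i + 1) n, ω j ≠ i}

theorem numLeaves_eq_card_leaves (ω : ℕ → ℕ) (n : ℕ) : numLeaves ω n = #(leaves ω n) :=
  rfl

theorem mem_leaves {ω : ℕ → ℕ} {n i : ℕ} :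
    i ∈ leaves ω n ↔ 1 ≤ i ∧ i ≤ n ∧ ∀ j, i < j → j ≤ n → ω j ≠ i := by
  simp only [leaves, Finset.mem_filter, mem_Icc, and_assoc, Nat.lt_iff_add_one_le, and_imp]

theorem numLeaves_eq_add (ω : ℕ → ℕ) (n k : ℕ) :
    numLeaves ω n = #{i ∈ leaves ω n | i ≤ k} + #{i ∈ leaves ω n | k < i} := by
  simp only [numLeaves_eq_card_leaves, ← not_le, card_filter_add_card_filter_not]

theorem card_filter_leaves_le (ω : ℕ → ℕ) (n k : ℕ) :
    #{i ∈ leaves ω n | i ≤ k} ≤ k := by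
  calc #{i ∈ leaves ω n | i ≤ k} ≤ #(Icc 1 k) :=
        card_le_card fun i hi ↦ by
          rw [Finset.mem_filter, mem_leaves] at hi; exact mem_Icc.2 ⟨hi.1.1, hi.2⟩
    _ = k := by simp

variable {k n : ℕ} {ω : ℕ → ℕ}

theorem mem_leaves_contractRoot_iff (hk : 1 ≤ k) (hkn : k ≤ n) {a : ℕ} (ha : 2 ≤ a) :
    a ∈ leaves (contractRoot k (n - k + 1) ω) (n - k + 1) ↔ a + k - 1 ∈ leaves ω n := by
  have hparent : ∀ j, 2 ≤ j → j ≤ n - k + 1 →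
      (contractRoot k (n - k + 1) ω j = a ↔ ω (j + k - 1) = a + k - 1) := fun j hj hjm ↦ by
    rw [contractRoot, if_pos ⟨hj, hjm⟩, mergeLabel_eq_iff hk ha]
  simp only [mem_leaves]
  constructor
  · rintro ⟨-, ham, hchild⟩
    refine ⟨by omega, by omega, fun j hj hjn hωj ↦
      hchild (j - k + 1) (by omega) (by omega) ?_⟩
    rwa [hparent _ (by omega) (by omega), show j - k + 1 + k - 1 = j by omega]
  · rintro ⟨-, han, hchild⟩
    exact ⟨by omega, by omega, fun j hj hjm h ↦
      hchild (j + k - 1) (by omega) (by omega) ((hparent j (by omega) hjm).1 h)⟩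

theorem one_mem_leaves_contractRoot_iff (hk : 1 ≤ k) (hkn : k ≤ n) :
    1 ∈ leaves (contractRoot k (n - k + 1) ω) (n - k + 1) ↔
      ∀ j, k < j → j ≤ n → k < ω j := by
  have hparent : ∀ j, 2 ≤ j → j ≤ n - k + 1 →
      (contractRoot k (n - k + 1) ω j = 1 ↔ ω (j + k - 1) ≤ k) := fun j hj hjm ↦ by
    rw [contractRoot, if_pos ⟨hj, hjm⟩, mergeLabel]
    split_ifs <;> omega
  simp only [mem_leaves, le_refl, true_and]
  constructor
  · rintro ⟨-, hchild⟩ j hkj hjn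
    by_contra! hωj
    refine hchild (j - k + 1) (by omega) (by omega) ((hparent _ (by omega) (by omega)).2 ?_)
    rwa [show j - k + 1 + k - 1 = j by omega]
  · intro h
    refine ⟨by omega, fun j hj hjm hωj ↦ ?_⟩
    have := h (j + k - 1) (by omega) (by omega)
    have := (hparent j (by omega) hjm).1 hωj
    omega

theorem card_leaves_contractRoot_filter_one_lt (hk : 1 ≤ k) (hkn : k ≤ n) :
    #{i ∈ leaves (contractRoot k (n - k + 1) ω) (n - k + 1) | 1 < i} =
      #{i ∈ leaves ω n | k < i} := by
  refine card_nbij' (· + k - 1) (· - k + 1) (fun a ha ↦ ?_) (fun b hb ↦ ?_) (fun a ha ↦ ?_)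
    (fun b hb ↦ ?_)
  · rw [Finset.mem_coe, Finset.mem_filter] at ha ⊢
    dsimp only
    exact ⟨(mem_leaves_contractRoot_iff hk hkn ha.2).1 ha.1, by omega⟩
  · rw [Finset.mem_coe, Finset.mem_filter] at hb ⊢
    dsimp only
    refine ⟨(mem_leaves_contractRoot_iff hk hkn (by omega)).2 ?_, by omega⟩
    rw [show b - k + 1 + k - 1 = b by omega]
    exact hb.1
  · have := (Finset.mem_filter.1 ha).2
    dsimp only
    omega
  · have := (Finset.mem_filter.1 hb).2
    dsimp only
    omega

theorem card_leaves_contractRoot_filter_le_one_bounds (hk : 1 ≤ k) (hkn : k ≤ n)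
    (hω : ∀ j, k < j → j ≤ n → 1 ≤ ω j) :
    #{i ∈ leaves (contractRoot k (n - k + 1) ω) (n - k + 1) | i ≤ 1} ≤
        #{i ∈ leaves ω n | i ≤ k} ∧
      #{i ∈ leaves ω n | i ≤ k} ≤
        #{i ∈ leaves (contractRoot k (n - k + 1) ω) (n - k + 1) | i ≤ 1} + (k - 1) := by
  have hB := card_filter_leaves_le (contractRoot k (n - k + 1) ω) (n - k + 1) 1
  have hA := card_filter_leaves_le ω n k
  by_cases hroot : 1 ∈ leaves (contractRoot k (n - k + 1) ω) (n - k + 1)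
  · have hB1 : 1 ≤ #{i ∈ leaves (contractRoot k (n - k + 1) ω) (n - k + 1) | i ≤ 1} :=
      card_pos.2 ⟨1, Finset.mem_filter.2 ⟨hroot, le_rfl⟩⟩
    have hkleaf : k ∈ leaves ω n := by
      rw [one_mem_leaves_contractRoot_iff hk hkn] at hroot
      exact mem_leaves.2 ⟨hk, hkn, fun j hkj hjn ↦ (hroot j hkj hjn).ne'⟩
    have hA1 : 1 ≤ #{i ∈ leaves ω n | i ≤ k} :=
      card_pos.2 ⟨k, Finset.mem_filter.2 ⟨hkleaf, le_rfl⟩⟩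
    omega
  · have hB0 : #{i ∈ leaves (contractRoot k (n - k + 1) ω) (n - k + 1) | i ≤ 1} = 0 :=
      card_eq_zero.2 <| filter_eq_empty_iff.2 fun i hi hi1 ↦
        hroot (by rwa [show i = 1 by have := (mem_leaves.1 hi).1; omega] at hi)
    rw [one_mem_leaves_contractRoot_iff hk hkn] at hroot
    push Not at hroot
    obtain ⟨j, hkj, hjn, hωj⟩ := hroot
    have hsub : {i ∈ leaves ω n | i ≤ k} ⊆ (Icc 1 k).erase (ω j) := fun i hi ↦ by
      rw [Finset.mem_filter, mem_leaves] at hi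
      exact mem_erase.2
        ⟨fun hij ↦ hi.1.2.2 j (by omega) hjn hij.symm, mem_Icc.2 ⟨hi.1.1, hi.2⟩⟩
    have hcard := card_le_card hsub
    rw [card_erase_of_mem (mem_Icc.2 ⟨hω j hkj hjn, hωj⟩), Nat.card_Icc] at hcard
    omega

theorem numLeaves_contractRoot_le (hk : 1 ≤ k) (hkn : k ≤ n)
    (hω : ∀ j, k < j → j ≤ n → 1 ≤ ω j) :
    numLeaves (contractRoot k (n - k + 1) ω) (n - k + 1) ≤ numLeaves ω n ∧
      numLeaves ω n ≤ numLeaves (contractRoot k (n - k + 1) ω) (n - k + 1) + (k - 1) := by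
  rw [numLeaves_eq_add ω n k, numLeaves_eq_add _ _ 1,
    card_leaves_contractRoot_filter_one_lt hk hkn]
  have := card_leaves_contractRoot_filter_le_one_bounds hk hkn hω
  omega

end Leaves

/-- Root-splitting coupling for the number of leaves: there is a coupling of the WRT
(with `w i = 1` for `i > k`) and a Hoppe tree with root weight `θ = w 1 + ⋯ + w k`
such that `L_{n-k+1}^θ ≤ L_n^w ≤ L_{n-k+1}^θ + k - 1` almost surely. -/
theorem leaves_coupling (w : ℕ → ℝ) (hw : ∀ i, 0 < w i) (k n : ℕ)
    (hk : 1 ≤ k) (hkn : k ≤ n) (hconst : ∀ i, k < i → w i = 1) :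
    ∃ ν : Measure ((ℕ → ℕ) × (ℕ → ℕ)), IsProbabilityMeasure ν ∧
      ν.map Prod.fst = wrtMeasure w n ∧
      ν.map Prod.snd =
        wrtMeasure (fun i => if i = 1 then ∑ j ∈ Finset.Icc 1 k, w j else 1) (n - k + 1) ∧
      ∀ᵐ q ∂ν,
        numLeaves q.2 (n - k + 1) ≤ numLeaves q.1 n ∧
        numLeaves q.1 n ≤ numLeaves q.2 (n - k + 1) + (k - 1) := by
  have hpair : Measurable fun ω ↦ (ω, contractRoot k (n - k + 1) ω) :=
    measurable_id.prodMk (measurable_contractRoot k _)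
  have := isProbabilityMeasure_wrtMeasure w hw n
  refine ⟨(wrtMeasure w n).map fun ω ↦ (ω, contractRoot k (n - k + 1) ω),
    Measure.isProbabilityMeasure_map hpair.aemeasurable, ?_, ?_, ?_⟩
  · rw [Measure.map_map measurable_fst hpair]
    exact Measure.map_id
  · rw [Measure.map_map measurable_snd hpair]
    exact map_contractRoot_wrtMeasure hw hk hkn hconst
  · rw [wrtMeasure_eq, map_sum_smul_dirac hpair]
    refine ae_sum_smul_dirac fun t ht ↦ numLeaves_contractRoot_le hk hkn fun j hkj hjn ↦ ?_
    exact one_le_parentFun_of_tableWeight_ne_zero w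
      (ENNReal.ofReal_pos.1 (pos_iff_ne_zero.2 ht)).ne' (by omega) hjn
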